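/- In a commutative idempotent involutive residuated lattice, for a negative element a (a ≤ 1) and all x, y with a·x = a and a·y = a, one has (x·y) ∧ ¬a = (x ∧ ¬a)·(y ∧ ¬a). -/

import Mathlib

/-- A commutative idempotent involutive residuated lattice. -/
class CIdInRL (α : Type*) extends Lattice α, CommMonoid α, Zero α where
  arrow : α → α → α
  residuation : ∀ x y z : α, x * y ≤ z ↔ y ≤ arrow x z
  idem : ∀ x : α, x * x = x
  involutive : ∀ x : α, arrow (arrow x 0) 0 = x

namespace CIdInRL
variable {α : Type*} [CIdInRL α]
/-- linear negation ¬x := x → 0 -/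
def neg (x : α) : α := arrow x 0
/-- 0_x := x ∧ ¬x -/
def zx (x : α) : α := x ⊓ neg x
/-- 1_x := x ∨ ¬x -/
def ox (x : α) : α := x ⊔ neg x
/-- monoidal order x ⊑ y iff x·y = x -/
def mleq (x y : α) : Prop := x * y = x
end CIdInRL

/-!
Write `s := z y ∧ ¬a`, `w := y ∧ ¬a` and `t := s · ¬(z w)`; the inequality `s ≤ z w` means `t ≤ 0`.
From `a y = a` one gets `¬w = ¬y ∨ a`, hence `t ≤ y (¬y ∨ a) ≤ 0 ∨ a`, while `a s ≤ z (a ¬a) ≤ z w`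
gives `a t ≤ 0` and `a ≤ 1` gives `0 t ≤ 0`. By idempotence `t = t t ≤ (0 ∨ a) t ≤ 0`.
Applying `z y ∧ ¬a ≤ z (y ∧ ¬a)` once to each factor of `x y` gives the theorem.
-/

namespace CIdInRL

variable {α : Type*} [CIdInRL α] {a x y z : α}

theorem mul_le_iff_le_arrow : x * y ≤ z ↔ y ≤ arrow x z := residuation x y z

instance : IsOrderedMonoid α where
  mul_le_mul_left x y h z := by
    rw [mul_comm x, mul_comm y, mul_le_iff_le_arrow]
    exact h.trans (mul_le_iff_le_arrow.mp le_rfl)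

theorem mul_neg_le_zero (x : α) : x * neg x ≤ 0 := mul_le_iff_le_arrow.mpr le_rfl

protected theorem neg_neg (x : α) : neg (neg x) = x := involutive x

theorem le_iff_mul_neg_le_zero : x ≤ y ↔ x * neg y ≤ 0 := by
  rw [mul_comm, mul_le_iff_le_arrow, ← neg, CIdInRL.neg_neg]

theorem neg_antitone : Antitone (neg : α → α) := fun x y h => by
  rw [le_iff_mul_neg_le_zero, CIdInRL.neg_neg, mul_comm]
  exact (mul_le_mul_left h _).trans (mul_neg_le_zero y)

theorem neg_inf (x y : α) : neg (x ⊓ y) = neg x ⊔ neg y := by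
  refine le_antisymm ?_ (sup_le (neg_antitone inf_le_left) (neg_antitone inf_le_right))
  have h := neg_antitone (le_inf (neg_antitone (le_sup_left : neg x ≤ neg x ⊔ neg y))
    (neg_antitone (le_sup_right : neg y ≤ neg x ⊔ neg y)))
  simpa only [CIdInRL.neg_neg] using h

protected theorem mul_sup (x y z : α) : x * (y ⊔ z) = x * y ⊔ x * z :=
  le_antisymm
    (mul_le_iff_le_arrow.mpr (sup_le (mul_le_iff_le_arrow.mp le_sup_left)
      (mul_le_iff_le_arrow.mp le_sup_right)))
    (sup_le (mul_le_mul_right le_sup_left x) (mul_le_mul_right le_sup_right x))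

theorem mul_neg_mul_le_neg (x y : α) : x * neg (x * y) ≤ neg y := by
  rw [le_iff_mul_neg_le_zero, CIdInRL.neg_neg, mul_right_comm]
  exact mul_neg_le_zero _

instance : ZeroLEOneClass α where
  zero_le_one := by
    have h : neg (1 : α) ≤ 0 := by simpa only [one_mul] using mul_neg_le_zero (1 : α)
    rw [le_iff_mul_neg_le_zero]
    exact (mul_le_mul_right h 0).trans_eq (idem 0)

theorem le_of_le_sup_of_mul_le {t b c d : α} (ht : t ≤ b ⊔ c) (hb : b * t ≤ d)
    (hc : c * t ≤ d) : t ≤ d :=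
  calc t = t * t := (idem t).symm
    _ ≤ (b ⊔ c) * t := mul_le_mul_left ht t
    _ = b * t ⊔ c * t := by rw [mul_comm, CIdInRL.mul_sup, mul_comm t, mul_comm t]
    _ ≤ d := sup_le hb hc

section Negative

variable (ha : a ≤ 1) (hy : a * y = a)
include ha hy

theorem mul_neg_le_inf_neg : a * neg a ≤ y ⊓ neg a := by
  have hay : a ≤ y := hy.symm.le.trans (mul_le_of_le_one_left' ha)
  refine le_inf ?_ (mul_le_of_le_one_left' ha)
  rw [le_iff_mul_neg_le_zero, mul_assoc]
  calc a * (neg a * neg y) ≤ a * (neg a * neg a) :=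
        mul_le_mul_right (mul_le_mul_right (neg_antitone hay) _) _
    _ ≤ 0 := by rw [idem]; exact mul_neg_le_zero a

theorem mul_mul_inf_neg_le (z : α) : a * (z * y ⊓ neg a) ≤ z * (y ⊓ neg a) :=
  calc a * (z * y ⊓ neg a) = a * (z * y ⊓ neg a) * (a * (z * y ⊓ neg a)) := (idem _).symm
    _ ≤ a * (z * y) * (a * neg a) :=
        mul_le_mul' (mul_le_mul_right inf_le_left a) (mul_le_mul_right inf_le_right a)
    _ = z * ((a * y) * (a * neg a)) := by ac_rfl
    _ = z * (a * neg a) := by rw [hy, ← mul_assoc a a, idem]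
    _ ≤ z * (y ⊓ neg a) := mul_le_mul_right (mul_neg_le_inf_neg ha hy) z

omit ha in
theorem mul_inf_neg_mul_neg_le (z : α) :
    (z * y ⊓ neg a) * neg (z * (y ⊓ neg a)) ≤ 0 ⊔ a := by
  have hw : neg (y ⊓ neg a) = neg y ⊔ a := by rw [neg_inf, CIdInRL.neg_neg]
  calc (z * y ⊓ neg a) * neg (z * (y ⊓ neg a)) ≤ z * y * neg (z * (y ⊓ neg a)) :=
        mul_le_mul_left inf_le_left _
    _ = y * (z * neg (z * (y ⊓ neg a))) := by ac_rfl
    _ ≤ y * (neg y ⊔ a) := mul_le_mul_right (hw ▸ mul_neg_mul_le_neg z (y ⊓ neg a)) y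
    _ = y * neg y ⊔ a := by rw [CIdInRL.mul_sup, mul_comm y a, hy]
    _ ≤ 0 ⊔ a := sup_le_sup_right (mul_neg_le_zero y) a

theorem mul_inf_neg_le_mul_inf_neg (z : α) : z * y ⊓ neg a ≤ z * (y ⊓ neg a) := by
  have ht := mul_inf_neg_mul_neg_le hy z
  rw [le_iff_mul_neg_le_zero]
  refine le_of_le_sup_of_mul_le ht ?_ ?_
  · calc 0 * _ ≤ (0 : α) * 1 := mul_le_mul_right (ht.trans (sup_le zero_le_one ha)) 0
      _ = 0 := mul_one 0
  · rw [← mul_assoc]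
    exact (mul_le_mul_left (mul_mul_inf_neg_le ha hy z) _).trans (mul_neg_le_zero _)

end Negative

end CIdInRL

open CIdInRL in
theorem stmt16 {α : Type*} [CIdInRL α] (a x y : α) (ha : a ≤ 1)
    (hx : a * x = a) (hy : a * y = a) :
    (x * y) ⊓ neg a = (x ⊓ neg a) * (y ⊓ neg a) := by
  apply le_antisymm
  · calc x * y ⊓ neg a ≤ x * (y ⊓ neg a) ⊓ neg a :=
          le_inf (mul_inf_neg_le_mul_inf_neg ha hy x) inf_le_right
      _ = (y ⊓ neg a) * x ⊓ neg a := by rw [mul_comm]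
      _ ≤ (y ⊓ neg a) * (x ⊓ neg a) := mul_inf_neg_le_mul_inf_neg ha hx _
      _ = (x ⊓ neg a) * (y ⊓ neg a) := mul_comm _ _
  · exact le_inf (mul_le_mul' inf_le_left inf_le_left)
      ((mul_le_mul' inf_le_right inf_le_right).trans_eq (idem _))
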